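/- arXiv:1304.6114 — 6 statements merged into one kernel-verified Lean document; each statement's English description precedes it below -/
import Mathlib

section
/- Let A be a real s×m matrix and B an invertible real s×s matrix. Then the s×s matrix C = AAᵀ(B⁻¹)ᵀ + B is invertible. -/
open Matrix

/-
Since `Bᴴ (B⁻¹)ᴴ = 1`, the matrix factors as `C = (A Aᴴ + B Bᴴ) (B⁻¹)ᴴ`. The first factor is
positive semidefinite plus positive definite (as `B` is invertible), hence positive definite
and so invertible.
-/

namespace Matrix

variable {n m : Type*} [Fintype n] [Fintype m] [DecidableEq n]

theorem mul_inv_conjTranspose_add_eq {R : Type*} [CommRing R] [StarRing R]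
    (M : Matrix n n R) {B : Matrix n n R} (hB : IsUnit B) :
    M * B⁻¹ᴴ + B = (M + B * Bᴴ) * B⁻¹ᴴ := by
  have hBBinv : Bᴴ * B⁻¹ᴴ = 1 := by
    rw [← conjTranspose_mul, nonsing_inv_mul _ ((isUnit_iff_isUnit_det B).mp hB),
      conjTranspose_one]
  rw [add_mul, mul_assoc B, hBBinv, mul_one]

variable {K : Type*} [Field K] [PartialOrder K] [StarRing K] [StarOrderedRing K]

theorem posDef_mul_conjTranspose_add_mul_conjTranspose (A : Matrix n m K)
    {B : Matrix n n K} (hB : IsUnit B) : (A * Aᴴ + B * Bᴴ).PosDef :=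
  (PosDef.mul_conjTranspose_self B (vecMul_injective_iff_isUnit.mpr hB)).posSemidef_add
    (posSemidef_self_mul_conjTranspose A)

theorem isUnit_mul_conjTranspose_mul_inv_conjTranspose_add (A : Matrix n m K)
    {B : Matrix n n K} (hB : IsUnit B) : IsUnit (A * Aᴴ * B⁻¹ᴴ + B) := by
  rw [mul_inv_conjTranspose_add_eq _ hB]
  refine (posDef_mul_conjTranspose_add_mul_conjTranspose A hB).isUnit.mul ?_
  rw [conjTranspose_nonsing_inv]
  exact isUnit_nonsing_inv_iff.mpr ((isUnit_conjTranspose B).mpr hB)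

end Matrix

/-- Let `A` be a real `s × m` matrix and `B` an invertible real `s × s`
matrix.  Then the `s × s` matrix `C = A Aᵀ (B⁻¹)ᵀ + B` is invertible too. -/
theorem statement1 (m s : ℕ) (A : Matrix (Fin s) (Fin m) ℝ) (B : Matrix (Fin s) (Fin s) ℝ)
    (hB : IsUnit B) : IsUnit (A * Aᵀ * (B⁻¹)ᵀ + B) := by
  simpa only [conjTranspose_eq_transpose_of_trivial] using
    isUnit_mul_conjTranspose_mul_inv_conjTranspose_add A hB
end

section
/- Let A be a real s×m matrix, B an invertible real s×s matrix, C = AAᵀ(B⁻¹)ᵀ + B, and W = {(u,v) ∈ ℝᵐ × ℝˢ : Au + Bv = 0}. Then for every σ ∈ ℝˢ, the pair (u,v) = (Aᵀ(B⁻¹)ᵀC⁻¹σ, C⁻¹σ) is the unique element of the orthogonal complement W⊥ of W in ℝᵐ × ℝˢ satisfying the linear equation Au + Bv = σ. -/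
/-!
With `w = (B⁻¹)ᵀ C⁻¹ σ` the candidate is `(Aᵀ w, Bᵀ w)`, a vector of the row space of
`[A B]`, hence orthogonal to its kernel `W`; and `A Aᵀ w + B Bᵀ w = C C⁻¹ σ = σ`.  The matrix
`C` is invertible because `C Bᵀ = A Aᵀ + B Bᵀ` is positive definite.  Uniqueness: the
difference of two such solutions lies in both `W` and `W⊥`, so it is orthogonal to itself.
-/

open Matrix

variable {k m n : Type*} [Fintype m] [Fintype n]

theorem transpose_mulVec_dotProduct_add_eq_zero [Fintype k] {R : Type*} [CommRing R]
    (A : Matrix k m R) (B : Matrix k n R) (w : k → R) {x : m → R} {y : n → R}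
    (h : A *ᵥ x + B *ᵥ y = 0) : (Aᵀ *ᵥ w) ⬝ᵥ x + (Bᵀ *ᵥ w) ⬝ᵥ y = 0 := by
  rw [mulVec_transpose, mulVec_transpose, ← dotProduct_mulVec, ← dotProduct_mulVec,
    ← dotProduct_add, h, dotProduct_zero]

section LinearOrderedField

variable {R : Type*} [Field R] [LinearOrder R] [IsStrictOrderedRing R]

theorem eq_zero_of_mulVec_add_eq_zero_of_forall_dotProduct
    (A : Matrix k m R) (B : Matrix k n R) {x : m → R} {y : n → R} (h : A *ᵥ x + B *ᵥ y = 0)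
    (horth : ∀ q : (m → R) × (n → R),
      A *ᵥ q.1 + B *ᵥ q.2 = 0 → x ⬝ᵥ q.1 + y ⬝ᵥ q.2 = 0) :
    x = 0 ∧ y = 0 := by
  have hself : x ⬝ᵥ x + y ⬝ᵥ y = 0 := horth (x, y) h
  have hx : 0 ≤ x ⬝ᵥ x := Fintype.sum_nonneg fun i => mul_self_nonneg (x i)
  have hy : 0 ≤ y ⬝ᵥ y := Fintype.sum_nonneg fun i => mul_self_nonneg (y i)
  exact ⟨dotProduct_self_eq_zero.1 (by linarith), dotProduct_self_eq_zero.1 (by linarith)⟩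

theorem eq_of_mulVec_add_eq_of_forall_dotProduct (A : Matrix k m R) (B : Matrix k n R)
    {x x' : m → R} {y y' : n → R} (h : A *ᵥ x + B *ᵥ y = A *ᵥ x' + B *ᵥ y')
    (horth : ∀ q : (m → R) × (n → R),
      A *ᵥ q.1 + B *ᵥ q.2 = 0 → x ⬝ᵥ q.1 + y ⬝ᵥ q.2 = 0)
    (horth' : ∀ q : (m → R) × (n → R),
      A *ᵥ q.1 + B *ᵥ q.2 = 0 → x' ⬝ᵥ q.1 + y' ⬝ᵥ q.2 = 0) :
    x = x' ∧ y = y' := by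
  have hsub : A *ᵥ (x - x') + B *ᵥ (y - y') = 0 := by
    rw [mulVec_sub, mulVec_sub, sub_add_sub_comm, h, sub_self]
  have horth_sub : ∀ q : (m → R) × (n → R), A *ᵥ q.1 + B *ᵥ q.2 = 0 →
      (x - x') ⬝ᵥ q.1 + (y - y') ⬝ᵥ q.2 = 0 := fun q hq => by
    rw [sub_dotProduct, sub_dotProduct, sub_add_sub_comm, horth q hq, horth' q hq, sub_self]
  obtain ⟨hx, hy⟩ := eq_zero_of_mulVec_add_eq_zero_of_forall_dotProduct A B hsub horth_sub
  exact ⟨sub_eq_zero.1 hx, sub_eq_zero.1 hy⟩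

end LinearOrderedField

theorem posDef_mul_transpose_add_mul_transpose [Fintype k] [DecidableEq k] (A : Matrix k m ℝ)
    {B : Matrix k k ℝ} (hB : IsUnit B) : (A * Aᵀ + B * Bᵀ).PosDef := by
  simpa only [conjTranspose_eq_transpose_of_trivial] using
    PosDef.posSemidef_add (posSemidef_self_mul_conjTranspose A)
      (PosDef.mul_conjTranspose_self B (vecMul_injective_iff_isUnit.2 hB))

theorem isUnit_mul_transpose_mul_transpose_inv_add [Fintype k] [DecidableEq k] (A : Matrix k m ℝ)
    {B : Matrix k k ℝ} (hB : IsUnit B) : IsUnit (A * Aᵀ * (B⁻¹)ᵀ + B) := by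
  have hBt : IsUnit Bᵀ := (isUnit_transpose B).2 hB
  have hfactor : A * Aᵀ * (B⁻¹)ᵀ + B = (A * Aᵀ + B * Bᵀ) * Bᵀ⁻¹ := by
    rw [Matrix.add_mul, Matrix.mul_assoc B, mul_nonsing_inv _ ((isUnit_iff_isUnit_det _).1 hBt),
      Matrix.mul_one, transpose_nonsing_inv]
  rw [hfactor]
  exact (posDef_mul_transpose_add_mul_transpose A hB).isUnit.mul (isUnit_nonsing_inv_iff.2 hBt)

/-- Let `A` be a real `s × m` matrix, `B` an invertible real `s × s`
matrix, `C = A Aᵀ (B⁻¹)ᵀ + B`, and `W = {(u,v) ∈ ℝᵐ × ℝˢ : Au + Bv = 0}`.  Then for every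
`σ ∈ ℝˢ` the pair `(u₀, v₀) = (Aᵀ (B⁻¹)ᵀ C⁻¹ σ, C⁻¹ σ)` is the unique element of the
orthogonal complement `W⊥` of `W` (membership in `W⊥` being expressed as orthogonality,
for the standard Euclidean inner product given by dot products of the components, to
every element of `W`) satisfying the linear equation `Au + Bv = σ`. -/
theorem statement3 (m s : ℕ) (A : Matrix (Fin s) (Fin m) ℝ) (B : Matrix (Fin s) (Fin s) ℝ)
    (hB : IsUnit B) (C : Matrix (Fin s) (Fin s) ℝ) (hC : C = A * Aᵀ * (B⁻¹)ᵀ + B)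
    (σ : Fin s → ℝ)
    (u₀ : Fin m → ℝ) (hu₀ : u₀ = (Aᵀ * (B⁻¹)ᵀ * C⁻¹).mulVec σ)
    (v₀ : Fin s → ℝ) (hv₀ : v₀ = C⁻¹.mulVec σ) :
    (∀ q : (Fin m → ℝ) × (Fin s → ℝ),
        A.mulVec q.1 + B.mulVec q.2 = 0 → u₀ ⬝ᵥ q.1 + v₀ ⬝ᵥ q.2 = 0) ∧
    A.mulVec u₀ + B.mulVec v₀ = σ ∧
    (∀ u : Fin m → ℝ, ∀ v : Fin s → ℝ,
      (∀ q : (Fin m → ℝ) × (Fin s → ℝ),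
          A.mulVec q.1 + B.mulVec q.2 = 0 → u ⬝ᵥ q.1 + v ⬝ᵥ q.2 = 0) →
      A.mulVec u + B.mulVec v = σ → u = u₀ ∧ v = v₀) := by
  have hCunit : IsUnit C := hC ▸ isUnit_mul_transpose_mul_transpose_inv_add A hB
  set w := (B⁻¹)ᵀ *ᵥ C⁻¹ *ᵥ σ
  have hu₀w : u₀ = Aᵀ *ᵥ w := by rw [hu₀, ← mulVec_mulVec, ← mulVec_mulVec]
  have hv₀w : v₀ = Bᵀ *ᵥ w := by
    rw [hv₀, mulVec_mulVec, ← transpose_mul, nonsing_inv_mul _ ((isUnit_iff_isUnit_det _).1 hB),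
      transpose_one, one_mulVec]
  have horth : ∀ q : (Fin m → ℝ) × (Fin s → ℝ),
      A *ᵥ q.1 + B *ᵥ q.2 = 0 → u₀ ⬝ᵥ q.1 + v₀ ⬝ᵥ q.2 = 0 := fun q hq => by
    rw [hu₀w, hv₀w]; exact transpose_mulVec_dotProduct_add_eq_zero A B w hq
  have hsolves : A *ᵥ u₀ + B *ᵥ v₀ = σ := by
    rw [hu₀, hv₀, mulVec_mulVec, mulVec_mulVec, ← add_mulVec, ← Matrix.mul_assoc,
      ← Matrix.mul_assoc, ← Matrix.add_mul, ← hC,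
      mul_nonsing_inv _ ((isUnit_iff_isUnit_det _).1 hCunit), one_mulVec]
  exact ⟨horth, hsolves, fun u v huv hσ => eq_of_mulVec_add_eq_of_forall_dotProduct A B
    (hσ.trans hsolves.symm) huv horth⟩
end

section
/- Let U ⊆ ℝᵏ be open, let G : U → ℝˢ be a C² map, and let ζ : J → U be a C² curve on a nontrivial interval J with G(ζ(t)) = 0 for all t ∈ J. Fix t ∈ J and assume that G'(ζ(t)) : ℝᵏ → ℝˢ is surjective. Then the orthogonal projection of the acceleration ζ̈(t) onto the orthogonal complement (ker G'(ζ(t)))⊥ is the unique vector w ∈ (ker G'(ζ(t)))⊥ satisfying G'(ζ(t)) w = −G''(ζ(t))(ζ̇(t), ζ̇(t)). -/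
/-! Differentiating `G (ζ t) = 0` twice (chain rule, then product rule) gives
`G'(ζ t) (ζ'' t) = -G''(ζ t) (ζ' t, ζ' t)`. For a linear map `A` with kernel `K`, the
projection `P` onto `Kᗮ` satisfies `A (P v) = A v` since `v - P v ∈ Kᗮᗮ = K`, and `A` is
injective on `Kᗮ`; so `P (ζ'' t)` is the only solution in `Kᗮ`. -/

open Set

theorem Set.OrdConnected.uniqueDiffOn {J : Set ℝ} (hJ : J.OrdConnected) (hJnt : J.Nontrivial) :
    UniqueDiffOn ℝ J :=
  have hconv : Convex ℝ J := convex_iff_ordConnected.mpr hJ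
  uniqueDiffOn_convex hconv (hconv.nontrivial_iff_nonempty_interior.mp hJnt)

theorem HasDerivAt.eq_zero_of_eqOn_zero {E : Type*} [NormedAddCommGroup E] [NormedSpace ℝ E]
    {J : Set ℝ} (hJ : UniqueDiffOn ℝ J) {f : ℝ → E} {d : E} {u : ℝ} (hu : u ∈ J)
    (hf : HasDerivAt f d u) (h0 : EqOn f 0 J) : d = 0 :=
  (hJ u hu).eq_deriv J hf.hasDerivWithinAt
    ((hasDerivWithinAt_const u J 0).congr_of_mem (fun _ hx => h0 hx) hu)

section CurveInLevelSet

variable {E F : Type*} [NormedAddCommGroup E] [NormedSpace ℝ E]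
  [NormedAddCommGroup F] [NormedSpace ℝ F]
  {G : E → F} {DG : E → E →L[ℝ] F} {D2G : E → E →L[ℝ] E →L[ℝ] F}
  {J : Set ℝ} {ζ ζ' ζ'' : ℝ → E}

theorem apply_velocity_eq_zero_of_comp_eqOn_zero (hJ : UniqueDiffOn ℝ J)
    (hDG : ∀ u ∈ J, HasFDerivAt G (DG (ζ u)) (ζ u)) (hζ' : ∀ u ∈ J, HasDerivAt ζ (ζ' u) u)
    (hG0 : EqOn (G ∘ ζ) 0 J) {u : ℝ} (hu : u ∈ J) : DG (ζ u) (ζ' u) = 0 :=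
  ((hDG u hu).comp_hasDerivAt u (hζ' u hu)).eq_zero_of_eqOn_zero hJ hu hG0

theorem apply_acceleration_eq_neg_of_comp_eqOn_zero (hJ : UniqueDiffOn ℝ J)
    (hDG : ∀ u ∈ J, HasFDerivAt G (DG (ζ u)) (ζ u))
    (hD2G : ∀ u ∈ J, HasFDerivAt DG (D2G (ζ u)) (ζ u))
    (hζ' : ∀ u ∈ J, HasDerivAt ζ (ζ' u) u) (hζ'' : ∀ u ∈ J, HasDerivAt ζ' (ζ'' u) u)
    (hG0 : EqOn (G ∘ ζ) 0 J) {t : ℝ} (ht : t ∈ J) :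
    DG (ζ t) (ζ'' t) = -D2G (ζ t) (ζ' t) (ζ' t) := by
  have hderiv : HasDerivAt (fun u => DG (ζ u) (ζ' u))
      (D2G (ζ t) (ζ' t) (ζ' t) + DG (ζ t) (ζ'' t)) t :=
    ((hD2G t ht).comp_hasDerivAt t (hζ' t ht)).clm_apply (hζ'' t ht)
  have hsum := hderiv.eq_zero_of_eqOn_zero hJ ht
    fun u hu => apply_velocity_eq_zero_of_comp_eqOn_zero hJ hDG hζ' hG0 hu
  exact eq_neg_of_add_eq_zero_right hsum

end CurveInLevelSet

theorem LinearMap.mem_orthogonal_ker_and_apply_eq_iff {𝕜 E F : Type*} [RCLike 𝕜]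
    [NormedAddCommGroup E] [InnerProductSpace 𝕜 E] [AddCommGroup F] [Module 𝕜 F]
    (A : E →ₗ[𝕜] F) [(ker A).HasOrthogonalProjection] (v w : E) :
    w ∈ (ker A)ᗮ ∧ A w = A v ↔ w = ((ker A)ᗮ.orthogonalProjectionOnto v : E) := by
  set K := ker A
  rw [Submodule.coe_orthogonalProjectionOnto_apply]
  constructor
  · rintro ⟨hw, hAw⟩
    have hvw : v - w ∈ K := by rw [mem_ker, map_sub, hAw, sub_self]
    exact (Kᗮ.eq_starProjection_of_mem_orthogonal hw (K.le_orthogonal_orthogonal hvw)).symm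
  · rintro rfl
    have hker : v - Kᗮ.starProjection v ∈ K := by
      simpa only [Submodule.orthogonal_orthogonal] using Kᗮ.sub_starProjection_mem_orthogonal v
    refine ⟨Kᗮ.starProjection_apply_mem v, ?_⟩
    rwa [mem_ker, map_sub, sub_eq_zero, eq_comm] at hker

theorem statement8_general (k s : ℕ) (U : Set (EuclideanSpace ℝ (Fin k)))
    (G : EuclideanSpace ℝ (Fin k) → EuclideanSpace ℝ (Fin s))
    (DG : EuclideanSpace ℝ (Fin k) →
      EuclideanSpace ℝ (Fin k) →L[ℝ] EuclideanSpace ℝ (Fin s))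
    (hDG : ∀ ξ ∈ U, HasFDerivAt G (DG ξ) ξ)
    (D2G : EuclideanSpace ℝ (Fin k) →
      EuclideanSpace ℝ (Fin k) →L[ℝ] EuclideanSpace ℝ (Fin k) →L[ℝ] EuclideanSpace ℝ (Fin s))
    (hD2G : ∀ ξ ∈ U, HasFDerivAt DG (D2G ξ) ξ)
    (J : Set ℝ) (hJ : J.OrdConnected) (hJnt : J.Nontrivial)
    (ζ ζ' ζ'' : ℝ → EuclideanSpace ℝ (Fin k))
    (hζ : ∀ t ∈ J, ζ t ∈ U)
    (hζ' : ∀ t ∈ J, HasDerivAt ζ (ζ' t) t)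
    (hζ'' : ∀ t ∈ J, HasDerivAt ζ' (ζ'' t) t)
    (hG0 : ∀ t ∈ J, G (ζ t) = 0)
    (t : ℝ) (ht : t ∈ J) :
    ∀ w : EuclideanSpace ℝ (Fin k),
      (w ∈ (LinearMap.ker (DG (ζ t) : EuclideanSpace ℝ (Fin k) →ₗ[ℝ] EuclideanSpace ℝ (Fin s)))ᗮ ∧ DG (ζ t) w = -(D2G (ζ t) (ζ' t) (ζ' t)))
        ↔ w = (Submodule.orthogonalProjectionOnto (LinearMap.ker (DG (ζ t) : EuclideanSpace ℝ (Fin k) →ₗ[ℝ] EuclideanSpace ℝ (Fin s)))ᗮ (ζ'' t) :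
            EuclideanSpace ℝ (Fin k)) := by
  intro w
  have hacc : DG (ζ t) (ζ'' t) = -D2G (ζ t) (ζ' t) (ζ' t) :=
    apply_acceleration_eq_neg_of_comp_eqOn_zero (hJ.uniqueDiffOn hJnt)
      (fun u hu => hDG _ (hζ u hu)) (fun u hu => hD2G _ (hζ u hu)) hζ' hζ'' hG0 ht
  rw [← hacc]
  exact LinearMap.mem_orthogonal_ker_and_apply_eq_iff _ _ w

/-- Let `U ⊆ ℝᵏ` be open, `G : U → ℝˢ` a `C²` map with first and second
Fréchet derivatives `DG ξ`, `D2G ξ` at `ξ ∈ U`, and let `ζ : J → U` be a `C²` curve on a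
nontrivial interval `J` with `G (ζ t) = 0` on `J`.  Fix `t ∈ J` and assume
`G'(ζ t) : ℝᵏ → ℝˢ` is surjective.  Then the orthogonal projection of the acceleration
`ζ'' t` onto the orthogonal complement `(ker G'(ζ t))⊥` is the unique vector
`w ∈ (ker G'(ζ t))⊥` satisfying `G'(ζ t) w = -G''(ζ t)(ζ' t, ζ' t)`. -/
theorem statement8 (k s : ℕ) (U : Set (EuclideanSpace ℝ (Fin k))) (hU : IsOpen U)
    (G : EuclideanSpace ℝ (Fin k) → EuclideanSpace ℝ (Fin s)) (hG : ContDiffOn ℝ 2 G U)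
    (DG : EuclideanSpace ℝ (Fin k) →
      EuclideanSpace ℝ (Fin k) →L[ℝ] EuclideanSpace ℝ (Fin s))
    (hDG : ∀ ξ ∈ U, HasFDerivAt G (DG ξ) ξ)
    (D2G : EuclideanSpace ℝ (Fin k) →
      EuclideanSpace ℝ (Fin k) →L[ℝ] EuclideanSpace ℝ (Fin k) →L[ℝ] EuclideanSpace ℝ (Fin s))
    (hD2G : ∀ ξ ∈ U, HasFDerivAt DG (D2G ξ) ξ)
    (J : Set ℝ) (hJ : J.OrdConnected) (hJnt : J.Nontrivial)
    (ζ ζ' ζ'' : ℝ → EuclideanSpace ℝ (Fin k))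
    (hζ : ∀ t ∈ J, ζ t ∈ U)
    (hζ' : ∀ t ∈ J, HasDerivAt ζ (ζ' t) t)
    (hζ'' : ∀ t ∈ J, HasDerivAt ζ' (ζ'' t) t)
    (hζ''cont : ContinuousOn ζ'' J)
    (hG0 : ∀ t ∈ J, G (ζ t) = 0)
    (t : ℝ) (ht : t ∈ J) (hsurj : Function.Surjective (DG (ζ t))) :
    ∀ w : EuclideanSpace ℝ (Fin k),
      (w ∈ (LinearMap.ker (DG (ζ t) : EuclideanSpace ℝ (Fin k) →ₗ[ℝ] EuclideanSpace ℝ (Fin s)))ᗮ ∧ DG (ζ t) w = -(D2G (ζ t) (ζ' t) (ζ' t)))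
        ↔ w = (Submodule.orthogonalProjectionOnto (LinearMap.ker (DG (ζ t) : EuclideanSpace ℝ (Fin k) →ₗ[ℝ] EuclideanSpace ℝ (Fin s)))ᗮ (ζ'' t) :
            EuclideanSpace ℝ (Fin k)) :=
  statement8_general k s U G DG hDG D2G hD2G J hJ hJnt ζ ζ' ζ'' hζ hζ' hζ'' hG0 t ht
end

section
/- Let U ⊆ ℝᵐ × ℝˢ be open and let g : U → ℝˢ be a C^∞ map such that ∂₂g(x,y) is invertible for every (x,y) ∈ U. Let E : ℝ × U × ℝᵐ × ℝˢ → ℝᵐ be continuous, and let x : J → ℝᵐ, y : J → ℝˢ be C² functions on a nontrivial interval J such that (x(t),y(t)) ∈ U, g(x(t),y(t)) = 0, and ẍ(t) = E(t, x(t), y(t), ẋ(t), ẏ(t)) for all t ∈ J. Then for all t ∈ J, ÿ(t) = −[∂₂g(x(t),y(t))]⁻¹ ( ∂₁g(x(t),y(t)) E(t,x(t),y(t),ẋ(t),ẏ(t)) + g''(x(t),y(t))((ẋ(t),ẏ(t)), (ẋ(t),ẏ(t))) ). -/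
/-! Differentiating the constraint `g (x t, y t) = 0` twice along the solution gives
`g''(ẋ, ẏ)(ẋ, ẏ) + ∂₁g ẍ + ∂₂g ÿ = 0` on `J`; substituting `ẍ = E` and inverting `∂₂g`
yields the formula for `ÿ`. A derivative may be read off from values on `J` alone because a
nontrivial interval is a set of unique differentiability. -/

open Set

section

variable {F : Type*} [NormedAddCommGroup F] [NormedSpace ℝ F]

theorem HasDerivAt.eq_zero_of_eqOn_zero_s10 {J : Set ℝ} (hJ : J.OrdConnected) (hJnt : J.Nontrivial)
    {f : ℝ → F} {f' : F} {t : ℝ} (ht : t ∈ J) (hf : HasDerivAt f f' t)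
    (h0 : ∀ u ∈ J, f u = 0) : f' = 0 :=
  (hJ.uniqueDiffOn hJnt t ht).eq_deriv J
    (hf.hasDerivWithinAt.congr (fun u hu => (h0 u hu).symm) (h0 t ht).symm)
    (hasDerivWithinAt_const t J 0)

variable {E : Type*} [NormedAddCommGroup E] [NormedSpace ℝ E]

theorem second_deriv_eq_zero_of_comp_eq_zero {J : Set ℝ} (hJ : J.OrdConnected)
    (hJnt : J.Nontrivial) {g : E → F} {Dg : E → E →L[ℝ] F} {D2g : E → E →L[ℝ] E →L[ℝ] F}
    {γ γ' γ'' : ℝ → E} (hDg : ∀ u ∈ J, HasFDerivAt g (Dg (γ u)) (γ u))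
    (hD2g : ∀ u ∈ J, HasFDerivAt Dg (D2g (γ u)) (γ u))
    (hγ' : ∀ u ∈ J, HasDerivAt γ (γ' u) u) (hγ'' : ∀ u ∈ J, HasDerivAt γ' (γ'' u) u)
    (h0 : ∀ u ∈ J, g (γ u) = 0) {t : ℝ} (ht : t ∈ J) :
    D2g (γ t) (γ' t) (γ' t) + Dg (γ t) (γ'' t) = 0 := by
  have hfirst : ∀ u ∈ J, Dg (γ u) (γ' u) = 0 := fun u hu =>
    ((hDg u hu).comp_hasDerivAt u (hγ' u hu)).eq_zero_of_eqOn_zero_s10 hJ hJnt hu h0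
  have hsecond : HasDerivAt (fun u => Dg (γ u) (γ' u))
      (D2g (γ t) (γ' t) (γ' t) + Dg (γ t) (γ'' t)) t :=
    ((hD2g t ht).comp_hasDerivAt t (hγ' t ht)).clm_apply (hγ'' t ht)
  exact hsecond.eq_zero_of_eqOn_zero_s10 hJ hJnt ht hfirst

end

theorem ContinuousLinearMap.snd_eq_neg_symm_of_apply_add_eq_zero {E₁ E₂ F : Type*}
    [AddCommGroup E₁] [Module ℝ E₁] [TopologicalSpace E₁]
    [AddCommGroup E₂] [Module ℝ E₂] [TopologicalSpace E₂]
    [AddCommGroup F] [Module ℝ F] [TopologicalSpace F]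
    (L : E₁ × E₂ →L[ℝ] F) (B : E₂ ≃L[ℝ] F) (hB : ∀ v, B v = L (0, v)) {a : E₁} {b : E₂} {c : F}
    (h : c + L (a, b) = 0) : b = -B.symm (L (a, 0) + c) := by
  have hsplit : L (a, b) = L (a, 0) + L (0, b) := by
    rw [← map_add, Prod.mk_add_mk, add_zero, zero_add]
  rw [← B.symm_apply_apply b, ← map_neg, hB]
  congr 1
  rw [hsplit] at h
  linear_combination (norm := abel) h

theorem statement10_general (m s : ℕ) (U : Set ((Fin m → ℝ) × (Fin s → ℝ)))
    (g : (Fin m → ℝ) × (Fin s → ℝ) → (Fin s → ℝ))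
    (Dg : (Fin m → ℝ) × (Fin s → ℝ) → ((Fin m → ℝ) × (Fin s → ℝ)) →L[ℝ] (Fin s → ℝ))
    (hDg : ∀ ξ ∈ U, HasFDerivAt g (Dg ξ) ξ)
    (D2g : (Fin m → ℝ) × (Fin s → ℝ) →
      ((Fin m → ℝ) × (Fin s → ℝ)) →L[ℝ] ((Fin m → ℝ) × (Fin s → ℝ)) →L[ℝ] (Fin s → ℝ))
    (hD2g : ∀ ξ ∈ U, HasFDerivAt Dg (D2g ξ) ξ)
    (B : (Fin m → ℝ) × (Fin s → ℝ) → (Fin s → ℝ) ≃L[ℝ] (Fin s → ℝ))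
    (hB : ∀ ξ ∈ U, ∀ v : Fin s → ℝ, B ξ v = Dg ξ (0, v))
    (E : ℝ → (Fin m → ℝ) → (Fin s → ℝ) → (Fin m → ℝ) → (Fin s → ℝ) → (Fin m → ℝ))
    (J : Set ℝ) (hJ : J.OrdConnected) (hJnt : J.Nontrivial)
    (x x' x'' : ℝ → Fin m → ℝ) (y y' y'' : ℝ → Fin s → ℝ)
    (hmem : ∀ t ∈ J, (x t, y t) ∈ U)
    (hx' : ∀ t ∈ J, HasDerivAt x (x' t) t)
    (hx'' : ∀ t ∈ J, HasDerivAt x' (x'' t) t)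
    (hy' : ∀ t ∈ J, HasDerivAt y (y' t) t)
    (hy'' : ∀ t ∈ J, HasDerivAt y' (y'' t) t)
    (hg0 : ∀ t ∈ J, g (x t, y t) = 0)
    (hDAE : ∀ t ∈ J, x'' t = E t (x t) (y t) (x' t) (y' t)) :
    ∀ t ∈ J, y'' t = -(B (x t, y t)).symm
      (Dg (x t, y t) (E t (x t) (y t) (x' t) (y' t), 0)
        + D2g (x t, y t) (x' t, y' t) (x' t, y' t)) := by
  intro t ht
  have hconstraint := second_deriv_eq_zero_of_comp_eq_zero hJ hJnt (γ := fun u => (x u, y u))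
    (γ' := fun u => (x' u, y' u)) (γ'' := fun u => (x'' u, y'' u))
    (fun u hu => hDg _ (hmem u hu)) (fun u hu => hD2g _ (hmem u hu))
    (fun u hu => (hx' u hu).prodMk (hy' u hu)) (fun u hu => (hx'' u hu).prodMk (hy'' u hu))
    hg0 ht
  rw [← hDAE t ht]
  exact (Dg (x t, y t)).snd_eq_neg_symm_of_apply_add_eq_zero _ (hB _ (hmem t ht)) hconstraint

/-- Let `U ⊆ ℝᵐ × ℝˢ` be open and `g : U → ℝˢ` a `C^∞` map with first
and second Fréchet derivatives `Dg ξ` and `D2g ξ` at `ξ ∈ U`, whose partial derivative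
with respect to the second variable `B ξ = (v ↦ Dg ξ (0, v))` is invertible for every
`ξ ∈ U` (so that `∂₁g ξ v₁ = Dg ξ (v₁, 0)` and `∂₂g ξ = B ξ`).  Let
`E : ℝ × U × ℝᵐ × ℝˢ → ℝᵐ` be continuous and let `x : J → ℝᵐ`, `y : J → ℝˢ` be `C²`
functions on a nontrivial interval `J` such that `(x t, y t) ∈ U`, `g (x t, y t) = 0` and
`ẍ t = E(t, x t, y t, ẋ t, ẏ t)` for all `t ∈ J`.  Then for all `t ∈ J`,
`ÿ t = -[∂₂g(x t, y t)]⁻¹ (∂₁g(x t, y t) E(t, x t, y t, ẋ t, ẏ t)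
        + g''(x t, y t)((ẋ t, ẏ t), (ẋ t, ẏ t)))`. -/
theorem statement10 (m s : ℕ) (U : Set ((Fin m → ℝ) × (Fin s → ℝ))) (hU : IsOpen U)
    (g : (Fin m → ℝ) × (Fin s → ℝ) → (Fin s → ℝ)) (hg : ContDiffOn ℝ (⊤ : ℕ∞) g U)
    (Dg : (Fin m → ℝ) × (Fin s → ℝ) → ((Fin m → ℝ) × (Fin s → ℝ)) →L[ℝ] (Fin s → ℝ))
    (hDg : ∀ ξ ∈ U, HasFDerivAt g (Dg ξ) ξ)
    (D2g : (Fin m → ℝ) × (Fin s → ℝ) →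
      ((Fin m → ℝ) × (Fin s → ℝ)) →L[ℝ] ((Fin m → ℝ) × (Fin s → ℝ)) →L[ℝ] (Fin s → ℝ))
    (hD2g : ∀ ξ ∈ U, HasFDerivAt Dg (D2g ξ) ξ)
    (B : (Fin m → ℝ) × (Fin s → ℝ) → (Fin s → ℝ) ≃L[ℝ] (Fin s → ℝ))
    (hB : ∀ ξ ∈ U, ∀ v : Fin s → ℝ, B ξ v = Dg ξ (0, v))
    (E : ℝ → (Fin m → ℝ) → (Fin s → ℝ) → (Fin m → ℝ) → (Fin s → ℝ) → (Fin m → ℝ))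
    (hE : Continuous fun q : ℝ × ((Fin m → ℝ) × (Fin s → ℝ)) × (Fin m → ℝ) × (Fin s → ℝ) =>
      E q.1 q.2.1.1 q.2.1.2 q.2.2.1 q.2.2.2)
    (J : Set ℝ) (hJ : J.OrdConnected) (hJnt : J.Nontrivial)
    (x x' x'' : ℝ → Fin m → ℝ) (y y' y'' : ℝ → Fin s → ℝ)
    (hmem : ∀ t ∈ J, (x t, y t) ∈ U)
    (hx' : ∀ t ∈ J, HasDerivAt x (x' t) t)
    (hx'' : ∀ t ∈ J, HasDerivAt x' (x'' t) t)
    (hy' : ∀ t ∈ J, HasDerivAt y (y' t) t)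
    (hy'' : ∀ t ∈ J, HasDerivAt y' (y'' t) t)
    (hx''cont : ContinuousOn x'' J) (hy''cont : ContinuousOn y'' J)
    (hg0 : ∀ t ∈ J, g (x t, y t) = 0)
    (hDAE : ∀ t ∈ J, x'' t = E t (x t) (y t) (x' t) (y' t)) :
    ∀ t ∈ J, y'' t = -(B (x t, y t)).symm
      (Dg (x t, y t) (E t (x t) (y t) (x' t) (y' t), 0)
        + D2g (x t, y t) (x' t, y' t) (x' t, y' t)) :=
  statement10_general m s U g Dg hDg D2g hD2g B hB E J hJ hJnt x x' x'' y y' y'' hmem hx' hx'' hy'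
    hy'' hg0 hDAE
end

section
/- Let U ⊆ ℝᵐ × ℝˢ be open, let g : U → ℝˢ be a C^∞ map with ∂₂g(p,q) invertible for every (p,q) ∈ U, set M = g⁻¹(0), and let E : ℝ × U × ℝᵐ × ℝˢ → ℝᵐ be any map with Ẽ defined by Ẽ(t,p,q,u,v) = ( E(t,p,q,u,v), −[∂₂g(p,q)]⁻¹( ∂₁g(p,q) E(t,p,q,u,v) + g''(p,q)((u,v),(u,v)) ) ). Then for every t ∈ ℝ, every ξ = (p,q) ∈ M and every η = (u,v) ∈ ker g'(p,q), the orthogonal projection of Ẽ(t,p,q,u,v) onto the orthogonal complement (ker g'(p,q))⊥ equals the unique vector w ∈ (ker g'(p,q))⊥ satisfying g'(p,q) w = −g''(p,q)((u,v),(u,v)); in particular this projection does not depend on t nor on the value E(t,p,q,u,v). -/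
/-!
Whatever the value of `E`, the second component of `Ẽ` is chosen so that
`g'(ξ) Ẽ = ∂₁g(ξ) E + ∂₂g(ξ) (-[∂₂g(ξ)]⁻¹ (∂₁g(ξ) E + g''(ξ)(η,η))) = -g''(ξ)(η,η)`.
Hence `-g''(ξ)(η,η)` lies in the range of `g'(ξ)`, so it has a unique preimage `w` in
`(ker g'(ξ))ᗮ`, and `Ẽ - w ∈ ker g'(ξ)` says exactly that `w` is the projection of `Ẽ`.
-/

theorem ContinuousLinearMap.apply_mk_neg_symm_add {𝕜 E F G : Type*} [Semiring 𝕜]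
    [AddCommGroup E] [Module 𝕜 E] [TopologicalSpace E]
    [AddCommGroup F] [Module 𝕜 F] [TopologicalSpace F]
    [AddCommGroup G] [Module 𝕜 G] [TopologicalSpace G]
    (L : E × F →L[𝕜] G) (B : F ≃L[𝕜] G) (hB : ∀ v, B v = L (0, v)) (a : E) (c : G) :
    L (a, -B.symm (L (a, 0) + c)) = -c := by
  rw [← add_zero a, ← zero_add (-_), ← Prod.mk_add_mk, map_add, ← hB]
  simp

theorem LinearMap.existsUnique_mem_orthogonal_ker_apply_eq {𝕜 V W : Type*} [RCLike 𝕜]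
    [NormedAddCommGroup V] [InnerProductSpace 𝕜 V] [AddCommGroup W] [Module 𝕜 W]
    (T : V →ₗ[𝕜] W) [(LinearMap.ker T).HasOrthogonalProjection] {y : W}
    (hy : y ∈ LinearMap.range T) :
    ∃! w, w ∈ (LinearMap.ker T)ᗮ ∧ T w = y := by
  obtain ⟨x, rfl⟩ := hy
  obtain ⟨k, hk, w, hw, rfl⟩ := (LinearMap.ker T).exists_add_mem_mem_orthogonal x
  refine ⟨w, ⟨hw, by simp [LinearMap.mem_ker.1 hk]⟩, fun w' ⟨hw', hTw'⟩ => ?_⟩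
  have hdiff : w' - w ∈ LinearMap.ker T ⊓ (LinearMap.ker T)ᗮ :=
    ⟨by simp [hTw', LinearMap.mem_ker.1 hk], Submodule.sub_mem _ hw' hw⟩
  rw [Submodule.inf_orthogonal_eq_bot, Submodule.mem_bot, sub_eq_zero] at hdiff
  exact hdiff

noncomputable def euclideanProdEquiv (m s : ℕ) :
    ((Fin m → ℝ) × (Fin s → ℝ)) ≃ₗ[ℝ]
      WithLp 2 (EuclideanSpace ℝ (Fin m) × EuclideanSpace ℝ (Fin s)) :=
  ((WithLp.linearEquiv 2 ℝ _).trans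
    ((WithLp.linearEquiv 2 ℝ _).prodCongr (WithLp.linearEquiv 2 ℝ _))).symm

theorem inner_euclideanProdEquiv (m s : ℕ) (x y : (Fin m → ℝ) × (Fin s → ℝ)) :
    inner ℝ (euclideanProdEquiv m s x) (euclideanProdEquiv m s y) =
      x.1 ⬝ᵥ y.1 + x.2 ⬝ᵥ y.2 := by
  simp [euclideanProdEquiv, WithLp.prod_inner_apply, EuclideanSpace.inner_eq_star_dotProduct,
    dotProduct_comm]

theorem LinearMap.existsUnique_dotProduct_orthogonal_ker_apply_eq {m s : ℕ} {W : Type*}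
    [AddCommGroup W] [Module ℝ W] (L : (Fin m → ℝ) × (Fin s → ℝ) →ₗ[ℝ] W) {y : W}
    (hy : y ∈ LinearMap.range L) :
    ∃! w : (Fin m → ℝ) × (Fin s → ℝ),
      (∀ z, L z = 0 → w.1 ⬝ᵥ z.1 + w.2 ⬝ᵥ z.2 = 0) ∧ L w = y := by
  let e := euclideanProdEquiv m s
  let T := L ∘ₗ e.symm.toLinearMap
  have hyT : y ∈ LinearMap.range T := by
    obtain ⟨x, rfl⟩ := hy
    exact ⟨e x, by simp [T]⟩
  refine e.toEquiv.existsUnique_congr (fun w => and_congr_left' ?_) |>.2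
    (T.existsUnique_mem_orthogonal_ker_apply_eq hyT)
  rw [Submodule.mem_orthogonal, ← e.toEquiv.forall_congr_right]
  simp only [LinearEquiv.coe_toEquiv, LinearMap.mem_ker, T, LinearMap.coe_comp,
    LinearEquiv.coe_coe, Function.comp_apply, LinearEquiv.symm_apply_apply, e,
    inner_euclideanProdEquiv, dotProduct_comm]

theorem statement12_general (m s : ℕ) (U : Set ((Fin m → ℝ) × (Fin s → ℝ)))
    (g : (Fin m → ℝ) × (Fin s → ℝ) → (Fin s → ℝ))
    (Dg : (Fin m → ℝ) × (Fin s → ℝ) → ((Fin m → ℝ) × (Fin s → ℝ)) →L[ℝ] (Fin s → ℝ))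
    (D2g : (Fin m → ℝ) × (Fin s → ℝ) →
      ((Fin m → ℝ) × (Fin s → ℝ)) →L[ℝ] ((Fin m → ℝ) × (Fin s → ℝ)) →L[ℝ] (Fin s → ℝ))
    (B : (Fin m → ℝ) × (Fin s → ℝ) → (Fin s → ℝ) ≃L[ℝ] (Fin s → ℝ))
    (hB : ∀ ξ ∈ U, ∀ v : Fin s → ℝ, B ξ v = Dg ξ (0, v))
    (E : ℝ → (Fin m → ℝ) → (Fin s → ℝ) → (Fin m → ℝ) → (Fin s → ℝ) → (Fin m → ℝ)) :
    ∀ (t : ℝ), ∀ p : Fin m → ℝ, ∀ q : Fin s → ℝ, (p, q) ∈ U → g (p, q) = 0 →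
      ∀ (u : Fin m → ℝ) (v : Fin s → ℝ), Dg (p, q) (u, v) = 0 →
        (∃! w : (Fin m → ℝ) × (Fin s → ℝ),
          (∀ z : (Fin m → ℝ) × (Fin s → ℝ),
              Dg (p, q) z = 0 → w.1 ⬝ᵥ z.1 + w.2 ⬝ᵥ z.2 = 0) ∧
          Dg (p, q) w = -(D2g (p, q) (u, v) (u, v))) ∧
        (∀ w : (Fin m → ℝ) × (Fin s → ℝ),
          (∀ z : (Fin m → ℝ) × (Fin s → ℝ),
              Dg (p, q) z = 0 → w.1 ⬝ᵥ z.1 + w.2 ⬝ᵥ z.2 = 0) →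
          Dg (p, q) w = -(D2g (p, q) (u, v) (u, v)) →
          Dg (p, q) ((E t p q u v,
              -(B (p, q)).symm (Dg (p, q) (E t p q u v, 0) + D2g (p, q) (u, v) (u, v)))
            - w) = 0) := by
  intro t p q hpq _ u v _
  have hDg_lift (a : Fin m → ℝ) (c : Fin s → ℝ) :=
    (Dg (p, q)).apply_mk_neg_symm_add (B (p, q)) (hB (p, q) hpq) a c
  refine ⟨(Dg (p, q)).toLinearMap.existsUnique_dotProduct_orthogonal_ker_apply_eq
    ⟨_, hDg_lift 0 _⟩, fun w _ hw => ?_⟩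
  rw [map_sub, hw, hDg_lift, sub_self]

/-- Let `U ⊆ ℝᵐ × ℝˢ` be open, `g : U → ℝˢ` a `C^∞` map with first and
second Fréchet derivatives `Dg ξ`, `D2g ξ`, whose partial derivative in the second
variable `B ξ = (v ↦ Dg ξ (0, v))` is invertible on `U`; set `M = g⁻¹(0)`.  Let `E` be
any map and `Ẽ(t,p,q,u,v) = (E(t,p,q,u,v),
  -[∂₂g(p,q)]⁻¹(∂₁g(p,q)E(t,p,q,u,v) + g''(p,q)((u,v),(u,v))))`.
Then for every `t`, every `ξ = (p,q) ∈ M` and every `η = (u,v) ∈ ker g'(p,q)`, the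
orthogonal projection of `Ẽ(t,p,q,u,v)` onto `(ker g'(p,q))⊥` equals the unique vector
`w ∈ (ker g'(p,q))⊥` with `g'(p,q) w = -g''(p,q)((u,v),(u,v))`.  Here membership of `w`
in `(ker g'(p,q))⊥` is expressed as orthogonality (for the standard Euclidean inner
product of `ℝᵐ × ℝˢ`, given by dot products of the components) to every element of the
kernel, and `w` being the orthogonal projection of `Ẽ` onto `(ker g'(p,q))⊥` is
expressed by the (equivalent, since the kernel is a finite-dimensional subspace)
condition that `w ∈ (ker g'(p,q))⊥` and `Ẽ - w ∈ ker g'(p,q)`.  The first conjunct below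
states the existence and uniqueness of `w`, the second that the orthogonal projection of
`Ẽ` equals this `w`; in particular the projection depends neither on `t` nor on the
value `E(t,p,q,u,v)`. -/
theorem statement12 (m s : ℕ) (U : Set ((Fin m → ℝ) × (Fin s → ℝ))) (hU : IsOpen U)
    (g : (Fin m → ℝ) × (Fin s → ℝ) → (Fin s → ℝ)) (hg : ContDiffOn ℝ (⊤ : ℕ∞) g U)
    (Dg : (Fin m → ℝ) × (Fin s → ℝ) → ((Fin m → ℝ) × (Fin s → ℝ)) →L[ℝ] (Fin s → ℝ))
    (hDg : ∀ ξ ∈ U, HasFDerivAt g (Dg ξ) ξ)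
    (D2g : (Fin m → ℝ) × (Fin s → ℝ) →
      ((Fin m → ℝ) × (Fin s → ℝ)) →L[ℝ] ((Fin m → ℝ) × (Fin s → ℝ)) →L[ℝ] (Fin s → ℝ))
    (hD2g : ∀ ξ ∈ U, HasFDerivAt Dg (D2g ξ) ξ)
    (B : (Fin m → ℝ) × (Fin s → ℝ) → (Fin s → ℝ) ≃L[ℝ] (Fin s → ℝ))
    (hB : ∀ ξ ∈ U, ∀ v : Fin s → ℝ, B ξ v = Dg ξ (0, v))
    (E : ℝ → (Fin m → ℝ) → (Fin s → ℝ) → (Fin m → ℝ) → (Fin s → ℝ) → (Fin m → ℝ)) :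
    ∀ (t : ℝ), ∀ p : Fin m → ℝ, ∀ q : Fin s → ℝ, (p, q) ∈ U → g (p, q) = 0 →
      ∀ (u : Fin m → ℝ) (v : Fin s → ℝ), Dg (p, q) (u, v) = 0 →
        (∃! w : (Fin m → ℝ) × (Fin s → ℝ),
          (∀ z : (Fin m → ℝ) × (Fin s → ℝ),
              Dg (p, q) z = 0 → w.1 ⬝ᵥ z.1 + w.2 ⬝ᵥ z.2 = 0) ∧
          Dg (p, q) w = -(D2g (p, q) (u, v) (u, v))) ∧
        (∀ w : (Fin m → ℝ) × (Fin s → ℝ),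
          (∀ z : (Fin m → ℝ) × (Fin s → ℝ),
              Dg (p, q) z = 0 → w.1 ⬝ᵥ z.1 + w.2 ⬝ᵥ z.2 = 0) →
          Dg (p, q) w = -(D2g (p, q) (u, v) (u, v)) →
          Dg (p, q) ((E t p q u v,
              -(B (p, q)).symm (Dg (p, q) (E t p q u v, 0) + D2g (p, q) (u, v) (u, v)))
            - w) = 0) :=
  statement12_general m s U g Dg D2g B hB E
end

section
/- Let U ⊆ ℝᵐ × ℝˢ be open, let g : U → ℝˢ be a C^∞ map with ∂₂g(p,q) invertible for every (p,q) ∈ U, set M = g⁻¹(0), let E : ℝ × U × ℝᵐ × ℝˢ → ℝᵐ be continuous, and define Ẽ(t,p,q,u,v) = ( E(t,p,q,u,v), −[∂₂g(p,q)]⁻¹( ∂₁g(p,q) E(t,p,q,u,v) + g''(p,q)((u,v),(u,v)) ) ). Let x : J → ℝᵐ and y : J → ℝˢ be C² functions on a nontrivial interval J with ξ(t) := (x(t),y(t)) ∈ M for all t ∈ J, and suppose ẍ(t) = E(t, x(t), y(t), ẋ(t), ẏ(t)) for all t ∈ J. Then for all t ∈ J one has P_{ξ(t)}(ξ̈(t))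 = P_{ξ(t)}( Ẽ(t, ξ(t), ξ̇(t)) ), where P_{ξ} denotes the orthogonal projection of ℝᵐ × ℝˢ onto ker g'(ξ); that is, ξ is a solution of the second order equation ξ̈_π = P_ξ Ẽ(t, ξ, ξ̇) on M. -/
/-!
Differentiating `g (ξ t) = 0` twice along the curve gives
`g''(ξ)(ξ̇, ξ̇) + g'(ξ) ξ̈ = 0`. Splitting `g'(ξ) ξ̈ = ∂₁g(ξ) ẍ + ∂₂g(ξ) ÿ`, substituting
`ẍ = E(t, ξ, ξ̇)` and inverting `∂₂g(ξ)` yields `ξ̈ = Ẽ(t, ξ, ξ̇)` exactly, so the two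
accelerations have the same tangential projection.
-/

open Matrix

section ConstraintDerivatives

variable {E F : Type*} [NormedAddCommGroup E] [NormedSpace ℝ E]
  [NormedAddCommGroup F] [NormedSpace ℝ F]

theorem HasDerivWithinAt.eq_zero_of_eqOn_const {f : ℝ → F} {f' c : F} {J : Set ℝ} {t : ℝ}
    (hf : HasDerivWithinAt f f' J t) (hJ : UniqueDiffWithinAt ℝ J t)
    (hc : ∀ u ∈ J, f u = c) (ht : t ∈ J) : f' = 0 :=
  hJ.eq_deriv _ hf ((hasDerivWithinAt_const t J c).congr hc (hc t ht))

variable {g : E → F} {Dg : E → E →L[ℝ] F} {J : Set ℝ} {γ γ' : ℝ → E}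

theorem constraint_velocity_eq_zero (hJ : UniqueDiffOn ℝ J)
    (hDg : ∀ t ∈ J, HasFDerivAt g (Dg (γ t)) (γ t)) (hγ : ∀ t ∈ J, HasDerivAt γ (γ' t) t)
    (hg : ∀ t ∈ J, g (γ t) = 0) : ∀ t ∈ J, Dg (γ t) (γ' t) = 0 := fun t ht =>
  ((hDg t ht).comp_hasDerivAt t (hγ t ht)).hasDerivWithinAt.eq_zero_of_eqOn_const
    (hJ t ht) hg ht

theorem constraint_acceleration_eq_zero {D2g : E → E →L[ℝ] E →L[ℝ] F} {γ'' : ℝ → E}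
    (hJ : UniqueDiffOn ℝ J) (hDg : ∀ t ∈ J, HasFDerivAt g (Dg (γ t)) (γ t))
    (hD2g : ∀ t ∈ J, HasFDerivAt Dg (D2g (γ t)) (γ t))
    (hγ : ∀ t ∈ J, HasDerivAt γ (γ' t) t) (hγ' : ∀ t ∈ J, HasDerivAt γ' (γ'' t) t)
    (hg : ∀ t ∈ J, g (γ t) = 0) :
    ∀ t ∈ J, D2g (γ t) (γ' t) (γ' t) + Dg (γ t) (γ'' t) = 0 := fun t ht =>
  have hDgγ : HasDerivAt (fun u => Dg (γ u)) (D2g (γ t) (γ' t)) t :=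
    (hD2g t ht).comp_hasDerivAt t (hγ t ht)
  (hDgγ.clm_apply (hγ' t ht)).hasDerivWithinAt.eq_zero_of_eqOn_const (hJ t ht)
    (constraint_velocity_eq_zero hJ hDg hγ hg) ht

end ConstraintDerivatives

theorem snd_eq_neg_symm_of_add_map_eq_zero {E F G : Type*} [NormedAddCommGroup E] [NormedSpace ℝ E]
    [NormedAddCommGroup F] [NormedSpace ℝ F] [NormedAddCommGroup G] [NormedSpace ℝ G]
    {L : E × F →L[ℝ] G} {B : F ≃L[ℝ] G} (hB : ∀ v, B v = L (0, v)) {a : E} {b : F} {c : G}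
    (h : c + L (a, b) = 0) : b = -B.symm (L (a, 0) + c) := by
  have hsplit : L (a, b) = L (a, 0) + B b := by
    rw [hB, ← map_add, Prod.mk_add_mk, add_zero, zero_add]
  rw [← map_neg, ContinuousLinearEquiv.eq_symm_apply]
  exact eq_neg_of_add_eq_zero_left (by rw [← h, hsplit]; abel)

theorem statement13_general (m s : ℕ) (U : Set ((Fin m → ℝ) × (Fin s → ℝ)))
    (g : (Fin m → ℝ) × (Fin s → ℝ) → (Fin s → ℝ))
    (Dg : (Fin m → ℝ) × (Fin s → ℝ) → ((Fin m → ℝ) × (Fin s → ℝ)) →L[ℝ] (Fin s → ℝ))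
    (hDg : ∀ ξ ∈ U, HasFDerivAt g (Dg ξ) ξ)
    (D2g : (Fin m → ℝ) × (Fin s → ℝ) →
      ((Fin m → ℝ) × (Fin s → ℝ)) →L[ℝ] ((Fin m → ℝ) × (Fin s → ℝ)) →L[ℝ] (Fin s → ℝ))
    (hD2g : ∀ ξ ∈ U, HasFDerivAt Dg (D2g ξ) ξ)
    (B : (Fin m → ℝ) × (Fin s → ℝ) → (Fin s → ℝ) ≃L[ℝ] (Fin s → ℝ))
    (hB : ∀ ξ ∈ U, ∀ v : Fin s → ℝ, B ξ v = Dg ξ (0, v))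
    (E : ℝ → (Fin m → ℝ) → (Fin s → ℝ) → (Fin m → ℝ) → (Fin s → ℝ) → (Fin m → ℝ))
    (J : Set ℝ) (hJ : J.OrdConnected) (hJnt : J.Nontrivial)
    (x x' x'' : ℝ → Fin m → ℝ) (y y' y'' : ℝ → Fin s → ℝ)
    (hmem : ∀ t ∈ J, (x t, y t) ∈ U)
    (hg0 : ∀ t ∈ J, g (x t, y t) = 0)
    (hx' : ∀ t ∈ J, HasDerivAt x (x' t) t)
    (hx'' : ∀ t ∈ J, HasDerivAt x' (x'' t) t)
    (hy' : ∀ t ∈ J, HasDerivAt y (y' t) t)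
    (hy'' : ∀ t ∈ J, HasDerivAt y' (y'' t) t)
    (hDAE : ∀ t ∈ J, x'' t = E t (x t) (y t) (x' t) (y' t)) :
    ∀ t ∈ J, ∀ z : (Fin m → ℝ) × (Fin s → ℝ), Dg (x t, y t) z = 0 →
      ((x'' t, y'' t)
          - (E t (x t) (y t) (x' t) (y' t),
             -(B (x t, y t)).symm
               (Dg (x t, y t) (E t (x t) (y t) (x' t) (y' t), 0)
                 + D2g (x t, y t) (x' t, y' t) (x' t, y' t)))).1 ⬝ᵥ z.1
        + ((x'' t, y'' t)
          - (E t (x t) (y t) (x' t) (y' t),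
             -(B (x t, y t)).symm
               (Dg (x t, y t) (E t (x t) (y t) (x' t) (y' t), 0)
                 + D2g (x t, y t) (x' t, y' t) (x' t, y' t)))).2 ⬝ᵥ z.2 = 0 := by
  intro t ht z _
  have hJud : UniqueDiffOn ℝ J :=
    uniqueDiffOn_convex hJ.convex (hJ.convex.nontrivial_iff_nonempty_interior.mp hJnt)
  have hacc := constraint_acceleration_eq_zero (γ := fun u => (x u, y u)) hJud
    (fun t ht => hDg _ (hmem t ht)) (fun t ht => hD2g _ (hmem t ht))
    (fun t ht => (hx' t ht).prodMk (hy' t ht)) (fun t ht => (hx'' t ht).prodMk (hy'' t ht))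
    hg0 t ht
  have hy''eq := snd_eq_neg_symm_of_add_map_eq_zero (hB _ (hmem t ht)) hacc
  rw [hDAE t ht] at hy''eq ⊢
  rw [← hy''eq, sub_self]
  simp only [Prod.fst_zero, Prod.snd_zero, zero_dotProduct, add_zero]

/-- Let `U ⊆ ℝᵐ × ℝˢ` be open, `g : U → ℝˢ` a `C^∞` map with first and
second Fréchet derivatives `Dg ξ`, `D2g ξ`, whose partial derivative in the second
variable `B ξ = (v ↦ Dg ξ (0, v))` is invertible on `U`; set `M = g⁻¹(0)`.  Let `E` be
continuous and `Ẽ(t,p,q,u,v) = (E(t,p,q,u,v),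
  -[∂₂g(p,q)]⁻¹(∂₁g(p,q)E(t,p,q,u,v) + g''(p,q)((u,v),(u,v))))`.
Let `ξ = (x, y) : J → M` be a `C²` curve on a nontrivial interval `J` with
`ẍ t = E(t, x t, y t, ẋ t, ẏ t)` on `J`.  Then for all `t ∈ J` one has
`P_{ξ t}(ξ̈ t) = P_{ξ t}(Ẽ(t, ξ t, ξ̇ t))`, where `P_ξ` is the orthogonal projection of
`ℝᵐ × ℝˢ` onto `ker g'(ξ)`: since `P_ξ a = P_ξ b` holds exactly when `a - b` is
orthogonal to `ker g'(ξ)`, this is expressed below as the orthogonality (for the standard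
Euclidean inner product of `ℝᵐ × ℝˢ`, given by dot products of the components) of
`ξ̈ t - Ẽ(t, ξ t, ξ̇ t)` to every element of `ker g'(ξ t)`; that is, `ξ` solves the
second order equation `ξ̈_π = P_ξ Ẽ(t, ξ, ξ̇)` on `M`. -/
theorem statement13 (m s : ℕ) (U : Set ((Fin m → ℝ) × (Fin s → ℝ))) (hU : IsOpen U)
    (g : (Fin m → ℝ) × (Fin s → ℝ) → (Fin s → ℝ)) (hg : ContDiffOn ℝ (⊤ : ℕ∞) g U)
    (Dg : (Fin m → ℝ) × (Fin s → ℝ) → ((Fin m → ℝ) × (Fin s → ℝ)) →L[ℝ] (Fin s → ℝ))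
    (hDg : ∀ ξ ∈ U, HasFDerivAt g (Dg ξ) ξ)
    (D2g : (Fin m → ℝ) × (Fin s → ℝ) →
      ((Fin m → ℝ) × (Fin s → ℝ)) →L[ℝ] ((Fin m → ℝ) × (Fin s → ℝ)) →L[ℝ] (Fin s → ℝ))
    (hD2g : ∀ ξ ∈ U, HasFDerivAt Dg (D2g ξ) ξ)
    (B : (Fin m → ℝ) × (Fin s → ℝ) → (Fin s → ℝ) ≃L[ℝ] (Fin s → ℝ))
    (hB : ∀ ξ ∈ U, ∀ v : Fin s → ℝ, B ξ v = Dg ξ (0, v))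
    (E : ℝ → (Fin m → ℝ) → (Fin s → ℝ) → (Fin m → ℝ) → (Fin s → ℝ) → (Fin m → ℝ))
    (hE : Continuous fun q : ℝ × ((Fin m → ℝ) × (Fin s → ℝ)) × (Fin m → ℝ) × (Fin s → ℝ) =>
      E q.1 q.2.1.1 q.2.1.2 q.2.2.1 q.2.2.2)
    (J : Set ℝ) (hJ : J.OrdConnected) (hJnt : J.Nontrivial)
    (x x' x'' : ℝ → Fin m → ℝ) (y y' y'' : ℝ → Fin s → ℝ)
    (hmem : ∀ t ∈ J, (x t, y t) ∈ U)
    (hg0 : ∀ t ∈ J, g (x t, y t) = 0)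
    (hx' : ∀ t ∈ J, HasDerivAt x (x' t) t)
    (hx'' : ∀ t ∈ J, HasDerivAt x' (x'' t) t)
    (hy' : ∀ t ∈ J, HasDerivAt y (y' t) t)
    (hy'' : ∀ t ∈ J, HasDerivAt y' (y'' t) t)
    (hx''cont : ContinuousOn x'' J) (hy''cont : ContinuousOn y'' J)
    (hDAE : ∀ t ∈ J, x'' t = E t (x t) (y t) (x' t) (y' t)) :
    ∀ t ∈ J, ∀ z : (Fin m → ℝ) × (Fin s → ℝ), Dg (x t, y t) z = 0 →
      ((x'' t, y'' t)
          - (E t (x t) (y t) (x' t) (y' t),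
             -(B (x t, y t)).symm
               (Dg (x t, y t) (E t (x t) (y t) (x' t) (y' t), 0)
                 + D2g (x t, y t) (x' t, y' t) (x' t, y' t)))).1 ⬝ᵥ z.1
        + ((x'' t, y'' t)
          - (E t (x t) (y t) (x' t) (y' t),
             -(B (x t, y t)).symm
               (Dg (x t, y t) (E t (x t) (y t) (x' t) (y' t), 0)
                 + D2g (x t, y t) (x' t, y' t) (x' t, y' t)))).2 ⬝ᵥ z.2 = 0 :=
  statement13_general m s U g Dg hDg D2g hD2g B hB E J hJ hJnt x x' x'' y y' y'' hmem hg0 hx' hx''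
    hy' hy'' hDAE
end
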